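/- Let u_1, …, u_s and g_1, …, g_s be holomorphic functions on 𝔹_N. Then the function z ↦ Σ_{j=1}^{s} conj(g_j(z))·u_j(z) is pluriharmonic on 𝔹_N if and only if Σ_{j=1}^{s} (conj(g_j(z)) − conj(g_j(0)))·(u_j(z) − u_j(0)) = 0 for all z ∈ 𝔹_N, which in turn is equivalent to: Σ_{j=1}^{s} conj(g_j(z))·u_j(z) = Σ_{j=1}^{s} ( conj(g_j(z))·u_j(0) + conj(g_j(0))·u_j(z) − conj(g_j(0))·u_j(0) ) for all z ∈ 𝔹_N. -/

import Mathlib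

open MeasureTheory Metric Complex ComplexConjugate Finset
open scoped ENNReal

noncomputable section

/-- `ℂ^N` with its (product) Lebesgue measure; `EuclideanSpace ℂ (Fin N)` is definitionally
`Fin N → ℂ`. -/
instance (N : ℕ) : MeasureSpace (EuclideanSpace ℂ (Fin N)) :=
  ⟨(volume : Measure (Fin N → ℂ)).map (WithLp.toLp 2)⟩

variable {N : ℕ}

/-- Hermitian inner product `⟨z,w⟩ = Σ z_j conj(w_j)`. -/
def hinner (z w : EuclideanSpace ℂ (Fin N)) : ℂ := ∑ j, z j * conj (w j)

/-- Lebesgue measure on `ℂ^N` normalized so that the unit ball has measure 1. -/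
def volB (N : ℕ) : Measure (EuclideanSpace ℂ (Fin N)) :=
  (volume (ball (0 : EuclideanSpace ℂ (Fin N)) 1))⁻¹ • volume

/-- The Berezin transform of `u`. -/
def berezin (u : EuclideanSpace ℂ (Fin N) → ℂ) (z : EuclideanSpace ℂ (Fin N)) : ℂ :=
  (((1 - ‖z‖ ^ 2) ^ (N + 1) : ℝ) : ℂ) *
    ∫ ξ in ball (0 : EuclideanSpace ℂ (Fin N)) 1,
      u ξ / ((‖1 - hinner z ξ‖ ^ (2 * (N + 1)) : ℝ) : ℂ) ∂(volB N)

/-- Pluriharmonic on the unit ball: sum of a holomorphic and an anti-holomorphic function. -/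
def Pluriharmonic (h : EuclideanSpace ℂ (Fin N) → ℂ) : Prop :=
  ∃ f g : EuclideanSpace ℂ (Fin N) → ℂ,
    DifferentiableOn ℂ f (ball 0 1) ∧ DifferentiableOn ℂ g (ball 0 1) ∧
      ∀ z ∈ ball (0 : EuclideanSpace ℂ (Fin N)) 1, h z = f z + conj (g z)

/-- `B(u)` has finite rank: it is a finite sum `Σ f_j conj(g_j)` with `f_j, g_j` holomorphic. -/
def FiniteRankBerezin (u : EuclideanSpace ℂ (Fin N) → ℂ) : Prop :=
  ∃ (n : ℕ) (f g : Fin n → EuclideanSpace ℂ (Fin N) → ℂ),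
    (∀ j, DifferentiableOn ℂ (f j) (ball 0 1)) ∧
    (∀ j, DifferentiableOn ℂ (g j) (ball 0 1)) ∧
    ∀ z ∈ ball (0 : EuclideanSpace ℂ (Fin N)) 1,
      berezin u z = ∑ j, f j z * conj (g j z)

/-- Wirtinger derivative `∂/∂z_j`. -/
def wdz (j : Fin N) (f : EuclideanSpace ℂ (Fin N) → ℂ) (z : EuclideanSpace ℂ (Fin N)) : ℂ :=
  (1 / 2 : ℂ) * (fderiv ℝ f z (EuclideanSpace.single j 1)
    - Complex.I * fderiv ℝ f z (EuclideanSpace.single j Complex.I))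

/-- Wirtinger derivative `∂/∂conj(z_j)`. -/
def wdzbar (j : Fin N) (f : EuclideanSpace ℂ (Fin N) → ℂ) (z : EuclideanSpace ℂ (Fin N)) : ℂ :=
  (1 / 2 : ℂ) * (fderiv ℝ f z (EuclideanSpace.single j 1)
    + Complex.I * fderiv ℝ f z (EuclideanSpace.single j Complex.I))

/-- The radial operator `E = Σ z_j ∂/∂z_j`. -/
def Eop (f : EuclideanSpace ℂ (Fin N) → ℂ) (z : EuclideanSpace ℂ (Fin N)) : ℂ :=
  ∑ j, z j * wdz j f z

/-- The radial operator `Ē = Σ conj(z_j) ∂/∂conj(z_j)`. -/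
def Ebarop (f : EuclideanSpace ℂ (Fin N) → ℂ) (z : EuclideanSpace ℂ (Fin N)) : ℂ :=
  ∑ j, conj (z j) * wdzbar j f z

/-- The Laplacian `Δ = Σ ∂²/(∂z_j ∂conj(z_j))`. -/
def lapOp (f : EuclideanSpace ℂ (Fin N) → ℂ) (z : EuclideanSpace ℂ (Fin N)) : ℂ :=
  ∑ j, wdz j (wdzbar j f) z

/-- The operator `|E+s|² − Δ = (E+s)∘(Ē+s) − Δ`. -/
def stepOp (s : ℝ) (f : EuclideanSpace ℂ (Fin N) → ℂ) : EuclideanSpace ℂ (Fin N) → ℂ :=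
  fun z => (Eop (fun w => Ebarop f w + (s : ℂ) * f w) z
      + (s : ℂ) * (Ebarop f z + (s : ℂ) * f z)) - lapOp f z

/-- The composition `(|E+m|²−Δ)∘(|E+(m−1)|²−Δ)∘⋯∘(|E+0|²−Δ)`. -/
def iterOp : ℕ → (EuclideanSpace ℂ (Fin N) → ℂ) → (EuclideanSpace ℂ (Fin N) → ℂ)
  | 0 => stepOp 0
  | (m + 1) => fun f => stepOp (m + 1) (iterOp m f)

/-- The invariant Laplacian `Δ̃ = (1−|z|²)(Δ − |E|²)`. -/
def invLap (f : EuclideanSpace ℂ (Fin N) → ℂ) (z : EuclideanSpace ℂ (Fin N)) : ℂ :=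
  (((1 - ‖z‖ ^ 2 : ℝ)) : ℂ) * (lapOp f z - Eop (Ebarop f) z)

/-- The operator `c − Δ̃` (a single factor of `p_m(Δ̃)`). -/
def factorOp (c : ℂ) (f : EuclideanSpace ℂ (Fin N) → ℂ) : EuclideanSpace ℂ (Fin N) → ℂ :=
  fun z => c * f z - invLap f z

/-- The product of operators `∏_{j=0}^{m} (j(j−N) − Δ̃)`. -/
def prodOp (N : ℕ) : ℕ → (EuclideanSpace ℂ (Fin N) → ℂ) → (EuclideanSpace ℂ (Fin N) → ℂ)
  | 0 => factorOp ((0 : ℂ) * ((0 : ℂ) - (N : ℂ)))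
  | (m + 1) => fun f => factorOp (((m : ℂ) + 1) * (((m : ℂ) + 1) - (N : ℂ))) (prodOp N m f)

open Classical in
/-- The Möbius automorphism `φ_w` of the unit ball interchanging `0` and `w`. -/
def mobius (w z : EuclideanSpace ℂ (Fin N)) : EuclideanSpace ℂ (Fin N) :=
  ((1 - hinner z w)⁻¹ : ℂ) •
    (w - (if w = 0 then 0 else (hinner z w / hinner w w) • w)
      - ((Real.sqrt (1 - ‖w‖ ^ 2) : ℝ) : ℂ) •
        (z - (if w = 0 then 0 else (hinner z w / hinner w w) • w)))

/-!
If `∑ conj (g_j) u_j = f + conj k` on the ball, restrict everything to the complex line through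
`0` and `z`. The polarization `Φ(λ, μ) = ∑ conj (g_j (conj μ • z)) u_j (λ • z) - f (λ • z) -
conj (k (conj μ • z))` is holomorphic in `(λ, μ)` and vanishes on the totally real plane
`μ = conj λ`, hence everywhere: by the one-variable identity theorem it vanishes first on the
complex lines parallel to `(1, 1)` through `(bi, -bi)`, then on those parallel to `(i, -i)`.
The alternating sum `Φ(1,1) - Φ(0,1) - Φ(1,0) + Φ(0,0)` is exactly
`∑ (conj (g_j z) - conj (g_j 0)) (u_j z - u_j 0)`. Conversely, that identity exhibits
`∑ conj (g_j) u_j` as a holomorphic plus an antiholomorphic function.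
-/

section Polarization

open Filter Topology

variable {E F : Type*} [NormedAddCommGroup E] [NormedSpace ℂ E] [CompleteSpace E]
  [NormedAddCommGroup F] [NormedSpace ℂ F]

theorem Prod.mk_mem_ball_zero_iff {α β : Type*} [SeminormedAddGroup α] [SeminormedAddGroup β]
    {a : α} {b : β} {r : ℝ} : (a, b) ∈ ball (0 : α × β) r ↔ a ∈ ball 0 r ∧ b ∈ ball 0 r := by
  rw [← Prod.mk_zero_zero, ← ball_prod_same]
  rfl

theorem DifferentiableOn.conj_comp_conj_ball {f : ℂ → ℂ} {R : ℝ}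
    (hf : DifferentiableOn ℂ f (ball 0 R)) :
    DifferentiableOn ℂ (fun z => conj (f (conj z))) (ball 0 R) := fun z hz => by
  have hz' : conj z ∈ ball (0 : ℂ) R := by simpa using hz
  exact (differentiableAt_conj_conj_iff.2
    (hf.differentiableAt (isOpen_ball.mem_nhds hz'))).differentiableWithinAt

theorem eq_zero_on_complex_line_of_eq_zero_on_real_line {B : Set F} (hBo : IsOpen B)
    (hBc : Convex ℝ B) {Φ : F → E} (hΦ : DifferentiableOn ℂ Φ B) {a v : F} (ha : a ∈ B)
    (hreal : ∀ x : ℝ, a + (x : ℂ) • v ∈ B → Φ (a + (x : ℂ) • v) = 0)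
    {w : ℂ} (hw : a + w • v ∈ B) : Φ (a + w • v) = 0 := by
  set S := (fun w : ℂ => a + w • v) ⁻¹' B
  have hSo : IsOpen S := hBo.preimage (by fun_prop)
  have hSc : Convex ℝ S :=
    (hBc.translate_preimage_right a).linear_preimage
      ((LinearMap.toSpanSingleton ℂ F v).restrictScalars ℝ)
  have h0S : (0 : ℂ) ∈ S := by simpa [S] using ha
  have hfreq : ∃ᶠ w in 𝓝[≠] (0 : ℂ), Φ (a + w • v) = 0 := by
    have hofReal : Tendsto (fun x : ℝ => (x : ℂ)) (𝓝[≠] 0) (𝓝[≠] 0) :=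
      tendsto_nhdsWithin_of_tendsto_nhds_of_eventually_within _
        ((Complex.continuous_ofReal.tendsto' 0 0 ofReal_zero).mono_left nhdsWithin_le_nhds)
        (eventually_nhdsWithin_of_forall fun x hx => by simpa using hx)
    have hS : ∀ᶠ x : ℝ in 𝓝 0, (x : ℂ) ∈ S :=
      Complex.continuous_ofReal.continuousAt.preimage_mem_nhds (by simpa using hSo.mem_nhds h0S)
    exact hofReal.frequently
      ((hS.filter_mono nhdsWithin_le_nhds).mono fun x hx => hreal x hx).frequently
  have hdiff : DifferentiableOn ℂ (fun w : ℂ => Φ (a + w • v)) S :=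
    hΦ.comp (by fun_prop) fun _ hw => hw
  exact (hdiff.analyticOnNhd hSo).eqOn_zero_of_preconnected_of_frequently_eq_zero
    hSc.isPreconnected h0S hfreq hw

theorem eqOn_zero_of_eq_zero_on_conj_diagonal {R : ℝ} {Φ : ℂ × ℂ → E}
    (hΦ : DifferentiableOn ℂ Φ (ball 0 R)) (hdiag : ∀ l ∈ ball (0 : ℂ) R, Φ (l, conj l) = 0) :
    Set.EqOn Φ 0 (ball 0 R) := by
  have mem_ball_iff (l m : ℂ) : (l, m) ∈ ball (0 : ℂ × ℂ) R ↔ ‖l‖ < R ∧ ‖m‖ < R := by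
    rw [Prod.mk_mem_ball_zero_iff, mem_ball_zero_iff, mem_ball_zero_iff]
  have line (a₁ a₂ v₁ v₂ : ℂ) (ha : (a₁, a₂) ∈ ball (0 : ℂ × ℂ) R)
      (hreal : ∀ x : ℝ, (a₁ + x * v₁, a₂ + x * v₂) ∈ ball (0 : ℂ × ℂ) R →
        Φ (a₁ + x * v₁, a₂ + x * v₂) = 0)
      (w : ℂ) (hw : (a₁ + w * v₁, a₂ + w * v₂) ∈ ball (0 : ℂ × ℂ) R) :
      Φ (a₁ + w * v₁, a₂ + w * v₂) = 0 := by
    have line_eq (w : ℂ) : (a₁, a₂) + w • (v₁, v₂) = (a₁ + w * v₁, a₂ + w * v₂) := rfl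
    simp only [← line_eq] at hreal hw ⊢
    exact eq_zero_on_complex_line_of_eq_zero_on_real_line isOpen_ball (convex_ball 0 R) hΦ ha
      hreal hw
  have antidiag (b : ℝ) (w : ℂ) (hw : (w + b * I, w - b * I) ∈ ball (0 : ℂ × ℂ) R) :
      Φ (w + b * I, w - b * I) = 0 := by
    have hb : ‖(b : ℂ) * I‖ < R := by
      rw [mem_ball_iff] at hw
      have := norm_sub_le (w + b * I) (w - b * I)
      rw [show w + b * I - (w - b * I) = 2 * (b * I) by ring, norm_mul] at this
      norm_num at this ⊢
      linarith
    have e (w : ℂ) : (w + b * I, w - b * I) = (b * I + w * 1, -(b * I) + w * 1) :=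
      Prod.ext (by ring) (by ring)
    rw [e] at hw ⊢
    refine line _ _ _ _ ((mem_ball_iff _ _).2 ⟨hb, by rwa [norm_neg]⟩) (fun x hx => ?_) w hw
    rw [← e] at hx ⊢
    have hconj : conj ((x : ℂ) + b * I) = x - b * I := by simp [conj_ofReal]; ring
    rw [← hconj] at hx ⊢
    exact hdiag _ (by simpa using ((mem_ball_iff _ _).1 hx).1)
  intro p hp
  obtain ⟨l, m⟩ := p
  have hmid : ‖(l + m) / 2‖ < R := by
    obtain ⟨hl, hm⟩ := (mem_ball_iff l m).1 hp
    rw [norm_div, Complex.norm_two]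
    linarith [norm_add_le l m]
  have e : (l, m) =
      ((l + m) / 2 + (l - m) / (2 * I) * I, (l + m) / 2 + (l - m) / (2 * I) * (-I)) := by
    refine Prod.ext ?_ ?_ <;> field_simp <;> ring
  rw [e] at hp ⊢
  refine line _ _ _ _ ((mem_ball_iff _ _).2 ⟨hmid, hmid⟩) (fun x hx => ?_) _ hp
  simp only [mul_neg, ← sub_eq_add_neg] at hx ⊢
  exact antidiag x _ hx

theorem sum_conj_sub_mul_sub_eq_zero_of_eq_add_conj_on_disc {ι : Type*} [Fintype ι] {R : ℝ}
    {G U : ι → ℂ → ℂ} {F K : ℂ → ℂ}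
    (hG : ∀ j, DifferentiableOn ℂ (G j) (ball 0 R)) (hU : ∀ j, DifferentiableOn ℂ (U j) (ball 0 R))
    (hF : DifferentiableOn ℂ F (ball 0 R)) (hK : DifferentiableOn ℂ K (ball 0 R))
    (h : ∀ x ∈ ball (0 : ℂ) R, ∑ j, conj (G j x) * U j x = F x + conj (K x))
    {x : ℂ} (hx : x ∈ ball 0 R) :
    ∑ j, (conj (G j x) - conj (G j 0)) * (U j x - U j 0) = 0 := by
  set Φ : ℂ × ℂ → ℂ := fun p =>
    ∑ j, conj (G j (conj p.2)) * U j p.1 - F p.1 - conj (K (conj p.2))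
  have hfst : Set.MapsTo Prod.fst (ball (0 : ℂ × ℂ) R) (ball 0 R) := fun _ hp =>
    (Prod.mk_mem_ball_zero_iff.1 hp).1
  have hsnd : Set.MapsTo Prod.snd (ball (0 : ℂ × ℂ) R) (ball 0 R) := fun _ hp =>
    (Prod.mk_mem_ball_zero_iff.1 hp).2
  have hΦ : DifferentiableOn ℂ Φ (ball 0 R) :=
    ((DifferentiableOn.fun_sum fun j _ =>
      ((hG j).conj_comp_conj_ball.comp differentiableOn_snd hsnd).mul
        ((hU j).comp differentiableOn_fst hfst)).sub (hF.comp differentiableOn_fst hfst)).sub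
      (hK.conj_comp_conj_ball.comp differentiableOn_snd hsnd)
  have hΦ_eqOn := eqOn_zero_of_eq_zero_on_conj_diagonal hΦ fun l hl => by
    simp only [Φ, conj_conj, h l hl]; ring
  have hΦ_zero {l m : ℂ} (hl : l ∈ ball 0 R) (hm : m ∈ ball 0 R) : Φ (l, m) = 0 :=
    hΦ_eqOn (Prod.mk_mem_ball_zero_iff.2 ⟨hl, hm⟩)
  have h0 : (0 : ℂ) ∈ ball 0 R := mem_ball_self (pos_of_mem_ball hx)
  have hx' : conj x ∈ ball (0 : ℂ) R := by simpa using hx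
  have key : ∑ j, (conj (G j x) - conj (G j 0)) * (U j x - U j 0) =
      Φ (x, conj x) - Φ (0, conj x) - Φ (x, 0) + Φ (0, 0) := by
    simp only [Φ, conj_conj, map_zero, mul_sub, sub_mul, Finset.sum_sub_distrib]
    ring
  rw [key, hΦ_zero hx hx', hΦ_zero h0 hx', hΦ_zero hx h0, hΦ_zero h0 h0]
  simp

theorem sum_conj_sub_mul_sub_eq_zero_of_eq_add_conj {ι : Type*} [Fintype ι] {r : ℝ}
    {u g : ι → F → ℂ} {f k : F → ℂ}
    (hu : ∀ j, DifferentiableOn ℂ (u j) (ball 0 r)) (hg : ∀ j, DifferentiableOn ℂ (g j) (ball 0 r))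
    (hf : DifferentiableOn ℂ f (ball 0 r)) (hk : DifferentiableOn ℂ k (ball 0 r))
    (h : ∀ z ∈ ball (0 : F) r, ∑ j, conj (g j z) * u j z = f z + conj (k z))
    {z : F} (hz : z ∈ ball 0 r) :
    ∑ j, (conj (g j z) - conj (g j 0)) * (u j z - u j 0) = 0 := by
  rcases eq_or_ne z 0 with rfl | hz0
  · simp
  have hzpos : 0 < ‖z‖ := norm_pos_iff.2 hz0
  have hline : Set.MapsTo (fun t : ℂ => t • z) (ball 0 (r / ‖z‖)) (ball 0 r) := fun t ht => by
    rw [mem_ball_zero_iff] at ht ⊢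
    rw [norm_smul]
    exact (lt_div_iff₀ hzpos).1 ht
  have hdiff : DifferentiableOn ℂ (fun t : ℂ => t • z) (ball 0 (r / ‖z‖)) := by fun_prop
  have h1 : (1 : ℂ) ∈ ball 0 (r / ‖z‖) := by
    rw [mem_ball_zero_iff, norm_one]
    exact (one_lt_div hzpos).2 (mem_ball_zero_iff.1 hz)
  simpa using sum_conj_sub_mul_sub_eq_zero_of_eq_add_conj_on_disc
    (G := fun j t => g j (t • z)) (U := fun j t => u j (t • z))
    (fun j => (hg j).comp hdiff hline) (fun j => (hu j).comp hdiff hline)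
    (hf.comp hdiff hline) (hk.comp hdiff hline) (fun t ht => h _ (hline ht)) h1

end Polarization

theorem Finset.sum_sub_mul_sub_eq_sub_sum {ι R : Type*} [CommRing R] (s : Finset ι)
    (a a' b b' : ι → R) :
    ∑ j ∈ s, (a j - a' j) * (b j - b' j) =
      ∑ j ∈ s, a j * b j - ∑ j ∈ s, (a j * b' j + a' j * b j - a' j * b' j) := by
  rw [← Finset.sum_sub_distrib]
  exact Finset.sum_congr rfl fun j _ => by ring

theorem pluriharmonic_of_sum_conj_mul_eq {ι : Type*} [Fintype ι]
    {u g : ι → EuclideanSpace ℂ (Fin N) → ℂ}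
    (hu : ∀ j, DifferentiableOn ℂ (u j) (ball 0 1)) (hg : ∀ j, DifferentiableOn ℂ (g j) (ball 0 1))
    (h : ∀ z ∈ ball (0 : EuclideanSpace ℂ (Fin N)) 1, ∑ j, conj (g j z) * u j z
      = ∑ j, (conj (g j z) * u j 0 + conj (g j 0) * u j z - conj (g j 0) * u j 0)) :
    Pluriharmonic (fun z => ∑ j, conj (g j z) * u j z) := by
  refine ⟨fun z => ∑ j, conj (g j 0) * u j z - ∑ j, conj (g j 0) * u j 0,
    fun z => ∑ j, g j z * conj (u j 0),
    (DifferentiableOn.fun_sum fun j _ => (hu j).const_mul _).sub (differentiableOn_const _),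
    DifferentiableOn.fun_sum fun j _ => (hg j).mul_const _, fun z hz => ?_⟩
  simp only [h z hz, map_sum, map_mul, conj_conj, Finset.sum_sub_distrib, Finset.sum_add_distrib]
  ring

theorem stmt14_general {N : ℕ} {s : ℕ}
    (u g : Fin s → EuclideanSpace ℂ (Fin N) → ℂ)
    (hu : ∀ j, DifferentiableOn ℂ (u j) (ball 0 1))
    (hg : ∀ j, DifferentiableOn ℂ (g j) (ball 0 1)) :
    (Pluriharmonic (fun z => ∑ j, conj (g j z) * u j z) ↔
      ∀ z ∈ ball (0 : EuclideanSpace ℂ (Fin N)) 1,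
        ∑ j, (conj (g j z) - conj (g j 0)) * (u j z - u j 0) = 0) ∧
    ((∀ z ∈ ball (0 : EuclideanSpace ℂ (Fin N)) 1,
        ∑ j, (conj (g j z) - conj (g j 0)) * (u j z - u j 0) = 0) ↔
      ∀ z ∈ ball (0 : EuclideanSpace ℂ (Fin N)) 1,
        ∑ j, conj (g j z) * u j z
          = ∑ j, (conj (g j z) * u j 0 + conj (g j 0) * u j z - conj (g j 0) * u j 0)) := by
  have expanded (z : EuclideanSpace ℂ (Fin N)) :
      ∑ j, (conj (g j z) - conj (g j 0)) * (u j z - u j 0) = 0 ↔ ∑ j, conj (g j z) * u j z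
        = ∑ j, (conj (g j z) * u j 0 + conj (g j 0) * u j z - conj (g j 0) * u j 0) := by
    rw [Finset.sum_sub_mul_sub_eq_sub_sum, sub_eq_zero]
  refine ⟨⟨?_, fun h => pluriharmonic_of_sum_conj_mul_eq hu hg fun z hz => (expanded z).1 (h z hz)⟩,
    forall₂_congr fun z _ => expanded z⟩
  rintro ⟨f, k, hf, hk, hfk⟩ z hz
  exact sum_conj_sub_mul_sub_eq_zero_of_eq_add_conj hu hg hf hk hfk hz

/-- Lemma 4.1: characterization of pluriharmonicity of `Σ conj(g_j)·u_j`. -/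
theorem stmt14 {N : ℕ} (hN : 1 ≤ N) {s : ℕ}
    (u g : Fin s → EuclideanSpace ℂ (Fin N) → ℂ)
    (hu : ∀ j, DifferentiableOn ℂ (u j) (ball 0 1))
    (hg : ∀ j, DifferentiableOn ℂ (g j) (ball 0 1)) :
    (Pluriharmonic (fun z => ∑ j, conj (g j z) * u j z) ↔
      ∀ z ∈ ball (0 : EuclideanSpace ℂ (Fin N)) 1,
        ∑ j, (conj (g j z) - conj (g j 0)) * (u j z - u j 0) = 0) ∧
    ((∀ z ∈ ball (0 : EuclideanSpace ℂ (Fin N)) 1,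
        ∑ j, (conj (g j z) - conj (g j 0)) * (u j z - u j 0) = 0) ↔
      ∀ z ∈ ball (0 : EuclideanSpace ℂ (Fin N)) 1,
        ∑ j, conj (g j z) * u j z
          = ∑ j, (conj (g j z) * u j 0 + conj (g j 0) * u j z - conj (g j 0) * u j 0)) :=
  stmt14_general u g hu hg

end
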